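/- (Interfacial work identity in the energy law.) Let Γ ⊆ ℝ³ be a set of finite 2-dimensional Hausdorff measure ℋ², let π₀ ∈ ℝ, let n_Γ : ℝ³ → ℝ³ with |n_Γ| = 1 on Γ, let H_Γ : ℝ³ → ℝ, let v_A, v_B, v_S : ℝ³ → ℝ³ be differentiable, let μ_A, μ_B, λ_B, π_A, π_B : ℝ³ → ℝ, and set 𝒯_A = μ_A D(v_A) − π_A I₃, 𝒯_B = μ_B D(v_B) + λ_B (div v_B) I₃ − π_B I₃, 𝒯̃_A = μ_A (n_Γ·(n_Γ·∇)v_A) − π_A, 𝒯̃_B = μ_B (n_Γ·(n_Γ·∇)v_B) + λ_B (div v_B) − π_B. Assume all integrands below are ℋ²-integrable on Γ and that on Γ: P_Γ v_A = 0, P_Γ v_B = 0, v_A·n_Γ = v_S·n_Γ, v_B·n_Γ = v_S·n_Γ, the stress balance π₀ H_Γ n_Γ + 𝒯̃_A n_Γ − 𝒯̃_B n_Γ = 0 holds, and the surface divergence theorem ∫_{Γ} div_Γ v_S dℋ² = −∫_{Γ} H_Γ (v_S·n_Γ) dℋ² holds. Then ∫_{Γ} ( 𝒯_A v_A·n_Γ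 − 𝒯_B v_B·n_Γ ) dℋ² = ∫_{Γ} (div_Γ v_S) π₀ dℋ². -/

import Mathlib

/-!
On Γ both bulk velocities are normal, `v = (v·n) n`, so the work of each traction is
`(v_S·n)` times the normal stress `n·𝒯n`, which equals `𝒯̃` because `n·D(v)n = n·(n·∇)v` and
`|n| = 1`. The stress balance then turns the integrand into `-π₀ H_Γ (v_S·n)`, and the surface
divergence theorem converts its integral into that of `π₀ div_Γ v_S`.
-/

open Matrix MeasureTheory

noncomputable section

/-- The velocity gradient matrix `(∇w)_{ij} = ∂w_i/∂x_j`. -/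
def gradV (w : (Fin 3 → ℝ) → Fin 3 → ℝ) (x : Fin 3 → ℝ) : Matrix (Fin 3) (Fin 3) ℝ :=
  fun i j => fderiv ℝ (fun y => w y i) x (Pi.single j 1)

/-- The rate-of-strain tensor `D(w) = ((∇w) + ᵗ(∇w))/2`. -/
def strainV (w : (Fin 3 → ℝ) → Fin 3 → ℝ) (x : Fin 3 → ℝ) : Matrix (Fin 3) (Fin 3) ℝ :=
  (1 / 2 : ℝ) • (gradV w x + (gradV w x)ᵀ)

/-- The divergence `div w = ∂_1 w_1 + ∂_2 w_2 + ∂_3 w_3`. -/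
def divV (w : (Fin 3 → ℝ) → Fin 3 → ℝ) (x : Fin 3 → ℝ) : ℝ :=
  ∑ i, gradV w x i i

/-- The directional derivative `(u·∇)w = u_1 ∂_1 w + u_2 ∂_2 w + u_3 ∂_3 w`. -/
def dirD (u : Fin 3 → ℝ) (w : (Fin 3 → ℝ) → Fin 3 → ℝ) (x : Fin 3 → ℝ) : Fin 3 → ℝ :=
  fun i => ∑ j, u j * gradV w x i j

/-- The surface divergence `div_Γ w = div w − n_Γ·((n_Γ·∇)w)`. -/
def sdivV (n w : (Fin 3 → ℝ) → Fin 3 → ℝ) (x : Fin 3 → ℝ) : ℝ :=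
  divV w x - n x ⬝ᵥ dirD (n x) w x

/-- Frobenius inner product `A : B = Σ_{i,j} A_{ij} B_{ij}`. -/
def frob (A B : Matrix (Fin 3) (Fin 3) ℝ) : ℝ := ∑ i, ∑ j, A i j * B i j

lemma strainV_mulVec_dotProduct_self (w : (Fin 3 → ℝ) → Fin 3 → ℝ) (n x : Fin 3 → ℝ) :
    (strainV w x *ᵥ n) ⬝ᵥ n = n ⬝ᵥ dirD n w x := by
  simp only [strainV, dirD, mulVec, dotProduct, Fin.sum_univ_three, Matrix.smul_apply,
    Matrix.add_apply, transpose_apply, smul_eq_mul]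
  ring

lemma smul_strainV_add_smul_one_mulVec_dotProduct_self (μ c : ℝ)
    (w : (Fin 3 → ℝ) → Fin 3 → ℝ) {n : Fin 3 → ℝ} (x : Fin 3 → ℝ) (hn : n ⬝ᵥ n = 1) :
    ((μ • strainV w x + c • (1 : Matrix (Fin 3) (Fin 3) ℝ)) *ᵥ n) ⬝ᵥ n
      = μ * (n ⬝ᵥ dirD n w x) + c := by
  rw [add_mulVec, add_dotProduct, smul_mulVec, smul_mulVec, smul_dotProduct, smul_dotProduct,
    strainV_mulVec_dotProduct_self, one_mulVec, hn, smul_eq_mul, smul_eq_mul, mul_one]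

lemma mulVec_dotProduct_of_eq_smul {ι R : Type*} [Fintype ι] [CommSemiring R]
    (T : Matrix ι ι R) {v n : ι → R} (hv : v = (v ⬝ᵥ n) • n) :
    (T *ᵥ v) ⬝ᵥ n = (v ⬝ᵥ n) * ((T *ᵥ n) ⬝ᵥ n) := by
  conv_lhs => rw [hv]
  rw [mulVec_smul, smul_dotProduct, smul_eq_mul]

lemma setIntegral_congr_of_integrableOn {X E : Type*} [MeasurableSpace X]
    [NormedAddCommGroup E] [NormedSpace ℝ E] {μ : Measure X} {s : Set X} {f g : X → E}
    (hf : IntegrableOn f s μ) (hg : IntegrableOn g s μ) (hfg : ∀ x ∈ s, f x = g x) :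
    ∫ x in s, f x ∂μ = ∫ x in s, g x ∂μ := by
  rw [← sub_eq_zero, ← integral_sub hf hg]
  exact setIntegral_eq_zero_of_forall_eq_zero fun x hx => sub_eq_zero.2 (hfg x hx)

theorem statement18_general
    (Γ : Set (Fin 3 → ℝ)) (π₀ : ℝ)
    (nΓ : (Fin 3 → ℝ) → Fin 3 → ℝ) (HΓ : (Fin 3 → ℝ) → ℝ)
    (vA vB vS : (Fin 3 → ℝ) → Fin 3 → ℝ)
    (μA μB lamB πA πB : (Fin 3 → ℝ) → ℝ)
    (TA TB : (Fin 3 → ℝ) → Matrix (Fin 3) (Fin 3) ℝ) (tTA tTB : (Fin 3 → ℝ) → ℝ)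
    (hTA : ∀ x, TA x = μA x • strainV vA x - πA x • (1 : Matrix (Fin 3) (Fin 3) ℝ))
    (hTB : ∀ x, TB x = μB x • strainV vB x
      + (lamB x * divV vB x) • (1 : Matrix (Fin 3) (Fin 3) ℝ)
      - πB x • (1 : Matrix (Fin 3) (Fin 3) ℝ))
    (htTA : ∀ x, tTA x = μA x * (nΓ x ⬝ᵥ dirD (nΓ x) vA x) - πA x)
    (htTB : ∀ x, tTB x = μB x * (nΓ x ⬝ᵥ dirD (nΓ x) vB x) + lamB x * divV vB x - πB x)
    -- ℋ²-integrability of the integrands on Γ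
    (hint1 : IntegrableOn
      (fun x => (TA x *ᵥ vA x) ⬝ᵥ nΓ x - (TB x *ᵥ vB x) ⬝ᵥ nΓ x) Γ μH[2])
    (hint3 : IntegrableOn (fun x => HΓ x * (vS x ⬝ᵥ nΓ x)) Γ μH[2])
    -- conditions on Γ
    (hn : ∀ x ∈ Γ, nΓ x ⬝ᵥ nΓ x = 1)
    (hPA : ∀ x ∈ Γ, vA x - (vA x ⬝ᵥ nΓ x) • nΓ x = 0)
    (hPB : ∀ x ∈ Γ, vB x - (vB x ⬝ᵥ nΓ x) • nΓ x = 0)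
    (hkA : ∀ x ∈ Γ, vA x ⬝ᵥ nΓ x = vS x ⬝ᵥ nΓ x)
    (hkB : ∀ x ∈ Γ, vB x ⬝ᵥ nΓ x = vS x ⬝ᵥ nΓ x)
    (hbal : ∀ x ∈ Γ, (π₀ * HΓ x) • nΓ x + tTA x • nΓ x - tTB x • nΓ x = 0)
    -- surface divergence theorem
    (hsdt : ∫ x in Γ, sdivV nΓ vS x ∂μH[2]
      = -∫ x in Γ, HΓ x * (vS x ⬝ᵥ nΓ x) ∂μH[2]) :
    ∫ x in Γ, ((TA x *ᵥ vA x) ⬝ᵥ nΓ x - (TB x *ᵥ vB x) ⬝ᵥ nΓ x) ∂μH[2]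
      = ∫ x in Γ, sdivV nΓ vS x * π₀ ∂μH[2] := by
  have hpt : ∀ x ∈ Γ, (TA x *ᵥ vA x) ⬝ᵥ nΓ x - (TB x *ᵥ vB x) ⬝ᵥ nΓ x
      = -π₀ * (HΓ x * (vS x ⬝ᵥ nΓ x)) := by
    intro x hx
    have hnA : (TA x *ᵥ nΓ x) ⬝ᵥ nΓ x = tTA x := by
      rw [hTA, htTA, sub_eq_add_neg, ← neg_smul,
        smul_strainV_add_smul_one_mulVec_dotProduct_self _ _ _ _ (hn x hx), ← sub_eq_add_neg]
    have hnB : (TB x *ᵥ nΓ x) ⬝ᵥ nΓ x = tTB x := by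
      rw [hTB, htTB, add_sub_assoc, ← sub_smul,
        smul_strainV_add_smul_one_mulVec_dotProduct_self _ _ _ _ (hn x hx), add_sub_assoc]
    have hnΓ : nΓ x ≠ 0 := fun h => by simpa [h] using hn x hx
    have hbalx : π₀ * HΓ x + tTA x - tTB x = 0 := by
      have h := hbal x hx
      rw [← add_smul, ← sub_smul, smul_eq_zero] at h
      exact h.resolve_right hnΓ
    rw [mulVec_dotProduct_of_eq_smul _ (sub_eq_zero.mp (hPA x hx)),
      mulVec_dotProduct_of_eq_smul _ (sub_eq_zero.mp (hPB x hx)), hnA, hnB, hkA x hx, hkB x hx]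
    linear_combination (vS x ⬝ᵥ nΓ x) * hbalx
  calc ∫ x in Γ, ((TA x *ᵥ vA x) ⬝ᵥ nΓ x - (TB x *ᵥ vB x) ⬝ᵥ nΓ x) ∂μH[2]
      = ∫ x in Γ, -π₀ * (HΓ x * (vS x ⬝ᵥ nΓ x)) ∂μH[2] :=
        setIntegral_congr_of_integrableOn hint1 (hint3.const_mul _) hpt
    _ = -π₀ * ∫ x in Γ, HΓ x * (vS x ⬝ᵥ nΓ x) ∂μH[2] := integral_const_mul _ _
    _ = (∫ x in Γ, sdivV nΓ vS x ∂μH[2]) * π₀ := by rw [hsdt]; ring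
    _ = ∫ x in Γ, sdivV nΓ vS x * π₀ ∂μH[2] := (integral_mul_const _ _).symm

/-- Interfacial work identity in the energy law:
`∫_Γ (𝒯_A v_A·n_Γ − 𝒯_B v_B·n_Γ) dℋ² = ∫_Γ (div_Γ v_S) π₀ dℋ²`. -/
theorem statement18
    (Γ : Set (Fin 3 → ℝ)) (hΓfin : μH[2] Γ < ⊤) (π₀ : ℝ)
    (nΓ : (Fin 3 → ℝ) → Fin 3 → ℝ) (HΓ : (Fin 3 → ℝ) → ℝ)
    (vA vB vS : (Fin 3 → ℝ) → Fin 3 → ℝ)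
    (hvA : Differentiable ℝ vA) (hvB : Differentiable ℝ vB) (hvS : Differentiable ℝ vS)
    (μA μB lamB πA πB : (Fin 3 → ℝ) → ℝ)
    (TA TB : (Fin 3 → ℝ) → Matrix (Fin 3) (Fin 3) ℝ) (tTA tTB : (Fin 3 → ℝ) → ℝ)
    (hTA : ∀ x, TA x = μA x • strainV vA x - πA x • (1 : Matrix (Fin 3) (Fin 3) ℝ))
    (hTB : ∀ x, TB x = μB x • strainV vB x
      + (lamB x * divV vB x) • (1 : Matrix (Fin 3) (Fin 3) ℝ)
      - πB x • (1 : Matrix (Fin 3) (Fin 3) ℝ))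
    (htTA : ∀ x, tTA x = μA x * (nΓ x ⬝ᵥ dirD (nΓ x) vA x) - πA x)
    (htTB : ∀ x, tTB x = μB x * (nΓ x ⬝ᵥ dirD (nΓ x) vB x) + lamB x * divV vB x - πB x)
    -- ℋ²-integrability of the integrands on Γ
    (hint1 : IntegrableOn
      (fun x => (TA x *ᵥ vA x) ⬝ᵥ nΓ x - (TB x *ᵥ vB x) ⬝ᵥ nΓ x) Γ μH[2])
    (hint2 : IntegrableOn (fun x => sdivV nΓ vS x) Γ μH[2])
    (hint3 : IntegrableOn (fun x => HΓ x * (vS x ⬝ᵥ nΓ x)) Γ μH[2])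
    -- conditions on Γ
    (hn : ∀ x ∈ Γ, nΓ x ⬝ᵥ nΓ x = 1)
    (hPA : ∀ x ∈ Γ, vA x - (vA x ⬝ᵥ nΓ x) • nΓ x = 0)
    (hPB : ∀ x ∈ Γ, vB x - (vB x ⬝ᵥ nΓ x) • nΓ x = 0)
    (hkA : ∀ x ∈ Γ, vA x ⬝ᵥ nΓ x = vS x ⬝ᵥ nΓ x)
    (hkB : ∀ x ∈ Γ, vB x ⬝ᵥ nΓ x = vS x ⬝ᵥ nΓ x)
    (hbal : ∀ x ∈ Γ, (π₀ * HΓ x) • nΓ x + tTA x • nΓ x - tTB x • nΓ x = 0)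
    -- surface divergence theorem
    (hsdt : ∫ x in Γ, sdivV nΓ vS x ∂μH[2]
      = -∫ x in Γ, HΓ x * (vS x ⬝ᵥ nΓ x) ∂μH[2]) :
    ∫ x in Γ, ((TA x *ᵥ vA x) ⬝ᵥ nΓ x - (TB x *ᵥ vB x) ⬝ᵥ nΓ x) ∂μH[2]
      = ∫ x in Γ, sdivV nΓ vS x * π₀ ∂μH[2] :=
  statement18_general Γ π₀ nΓ HΓ vA vB vS μA μB lamB πA πB TA TB tTA tTB hTA hTB htTA htTB hint1
    hint3 hn hPA hPB hkA hkB hbal hsdt
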